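/- Define P : ℝ × ℝ → ℝ by P(Z,T) := ∑_{m=0}^∞ (2/M_m)·sin(M_m·Z)·exp(−M_m²·T), where M_m := (π/2)·(2·m + 1). Then for every T > 0: (i) P(0,T) = 0, and (ii) the map Z ↦ P(Z,T) is differentiable at Z = 1 with derivative equal to 0. -/

import Mathlib

open Real

/-- `M_m = (π/2)(2m+1)`. -/
noncomputable def terzaghiM (m : ℕ) : ℝ := π / 2 * (2 * (m : ℝ) + 1)

/-- Terzaghi consolidation solution
`P(Z,T) = ∑ (2/M_m) sin(M_m Z) exp(−M_m² T)`. -/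
noncomputable def terzaghiP (p : ℝ × ℝ) : ℝ :=
  ∑' m : ℕ, 2 / terzaghiM m * Real.sin (terzaghiM m * p.1) * Real.exp (-(terzaghiM m) ^ 2 * p.2)

lemma terzaghiM_pos (m : ℕ) : 0 < terzaghiM m := by
  unfold terzaghiM
  have := Real.pi_pos
  positivity

lemma cos_terzaghiM (m : ℕ) : Real.cos (terzaghiM m) = 0 := by
  rw [Real.cos_eq_zero_iff]
  exact ⟨m, by unfold terzaghiM; push_cast; ring⟩

/-- For `T > 0`: drained boundary `P(0,T) = 0`, and impermeable boundary:
`Z ↦ P(Z,T)` is differentiable at `Z = 1` with derivative `0`. -/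
theorem terzaghi_boundary_conditions (T : ℝ) (hT : 0 < T) :
    terzaghiP (0, T) = 0 ∧ HasDerivAt (fun z => terzaghiP (z, T)) 0 1 := by
  have hMsq : ∀ n : ℕ, (n : ℝ) * T ≤ (terzaghiM n) ^ 2 * T := by
    intro n
    have hpi : (3 : ℝ) < π := Real.pi_gt_three
    have hn : (0 : ℝ) ≤ n := n.cast_nonneg
    have h1 : (1:ℝ) ≤ (π/2)^2 := by nlinarith
    have h2 : (n:ℝ) ≤ (2*(n:ℝ)+1)^2 := by nlinarith
    have : (n : ℝ) ≤ (terzaghiM n) ^ 2 := by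
      unfold terzaghiM
      have h3 : (π / 2 * (2 * (n:ℝ) + 1))^2 = (π/2)^2 * (2*(n:ℝ)+1)^2 := by ring
      rw [h3]
      calc (n:ℝ) ≤ (2*(n:ℝ)+1)^2 := h2
        _ ≤ (π/2)^2 * (2*(n:ℝ)+1)^2 := le_mul_of_one_le_left (by positivity) h1
    nlinarith
  have hexp_le : ∀ n : ℕ, Real.exp (-(terzaghiM n) ^ 2 * T) ≤ Real.exp (-T) ^ n := by
    intro n
    rw [← Real.exp_nat_mul]
    apply Real.exp_le_exp.2
    have := hMsq n; nlinarith
  have hu : Summable (fun n : ℕ => 2 * Real.exp (-T) ^ n) := by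
    apply Summable.mul_left
    apply summable_geometric_of_lt_one (le_of_lt (Real.exp_pos _))
    exact Real.exp_lt_one_iff.2 (by linarith)
  set g : ℕ → ℝ → ℝ := fun n z =>
    2 / terzaghiM n * Real.sin (terzaghiM n * z) * Real.exp (-(terzaghiM n) ^ 2 * T) with hg_def
  set g' : ℕ → ℝ → ℝ := fun n z =>
    2 * Real.cos (terzaghiM n * z) * Real.exp (-(terzaghiM n) ^ 2 * T) with hg'_def
  have hg : ∀ n y, HasDerivAt (g n) (g' n y) y := by
    intro n y
    have h1 : HasDerivAt (fun z : ℝ => terzaghiM n * z) (terzaghiM n) y := by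
      simpa using (hasDerivAt_id y).const_mul (terzaghiM n)
    have h2 : HasDerivAt (fun z : ℝ => Real.sin (terzaghiM n * z))
        (Real.cos (terzaghiM n * y) * terzaghiM n) y :=
      (Real.hasDerivAt_sin _).comp y h1
    have h3 := (h2.const_mul (2 / terzaghiM n)).mul_const (Real.exp (-(terzaghiM n) ^ 2 * T))
    convert h3 using 1
    · rfl
    · rfl
    have hM := (terzaghiM_pos n).ne'
    rw [show 2 / terzaghiM n * (Real.cos (terzaghiM n * y) * terzaghiM n) = 2 * Real.cos (terzaghiM n * y) by rw [mul_comm (Real.cos _), ← mul_assoc, div_mul_cancel₀ _ hM]]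
  have hg' : ∀ (n : ℕ) (y : ℝ), ‖g' n y‖ ≤ 2 * Real.exp (-T) ^ n := by
    intro n y
    have hc : |Real.cos (terzaghiM n * y)| ≤ 1 := Real.abs_cos_le_one _
    have he : (0:ℝ) < Real.exp (-(terzaghiM n) ^ 2 * T) := Real.exp_pos _
    rw [hg'_def]
    simp only [Real.norm_eq_abs, abs_mul, abs_two, abs_of_pos he]
    calc 2 * |Real.cos (terzaghiM n * y)| * Real.exp (-(terzaghiM n) ^ 2 * T)
        ≤ 2 * 1 * Real.exp (-(terzaghiM n) ^ 2 * T) := by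
          apply mul_le_mul_of_nonneg_right _ (le_of_lt he)
          nlinarith
      _ ≤ 2 * Real.exp (-T) ^ n := by
          rw [mul_one]
          exact mul_le_mul_of_nonneg_left (hexp_le n) (by norm_num)
  have hg0 : Summable fun n => g n 0 := by
    apply summable_of_ne_finset_zero (s := ∅)
    intro n _
    simp [hg_def]
  have key := hasDerivAt_tsum hu hg hg' hg0 1
  have hteq : (fun z => terzaghiP (z, T)) = fun z => ∑' n, g n z := by
    funext z; rfl
  have hsum0 : (∑' n, g' n 1) = 0 := by
    have : ∀ n : ℕ, g' n 1 = 0 := by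
      intro n; simp [hg'_def, cos_terzaghiM n]
    simp [this]
  refine ⟨?_, ?_⟩
  · unfold terzaghiP
    simp
  · rw [hteq]
    rw [hsum0] at key
    exact key
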